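/- (Sufficient condition for invertibility of E[H_S(x)]) If E_{S∼D_x}[S Sᵀ] is invertible and DF(x)ᵀ DF(x) is invertible, then E_{S∼D_x}[H_S(x)] with H_S(x) = S(Sᵀ DF(x)ᵀ DF(x) S)† Sᵀ is invertible. -/

import Mathlib

/-!
Write `M = Sᵀ Jᵀ J S` and `H = S M† Sᵀ`. The Penrose equations are invariant under
transposition, so by uniqueness `M†` is symmetric like `M`; then `M† = M†ᵀ M M†` is positive
semidefinite, and so is `H`. If `E[H] v = 0`, the nonnegative quadratic forms `vᵀ H v` have
expectation zero, so `H v = 0` almost surely. For `w = Sᵀ v` this says `M† w = 0`, hence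
`M w = M (M M†) w = 0`, hence `S w = 0` because `Jᵀ J` is positive definite. Thus `S Sᵀ v = 0`
almost surely, so `E[S Sᵀ] v = 0` and `v = 0`.
-/

open Matrix MeasureTheory
open scoped ComplexOrder

namespace Matrix

variable {m n : Type*} [Fintype m] [Fintype n]

structure IsMoorePenroseInverse {R : Type*} [Semiring R] [StarRing R]
    (A : Matrix m n R) (B : Matrix n m R) : Prop where
  mul_mul_eq : A * B * A = A
  mul_mul_eq' : B * A * B = B
  isHermitian_mul : (A * B).IsHermitian
  isHermitian_mul' : (B * A).IsHermitian

namespace IsMoorePenroseInverse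

section Semiring

variable {R : Type*} [Semiring R] [StarRing R] {A : Matrix m n R} {B C : Matrix n m R}

theorem conjTranspose (h : IsMoorePenroseInverse A B) : IsMoorePenroseInverse Aᴴ Bᴴ where
  mul_mul_eq := by
    rw [← conjTranspose_mul, ← conjTranspose_mul, ← Matrix.mul_assoc, h.mul_mul_eq]
  mul_mul_eq' := by
    rw [← conjTranspose_mul, ← conjTranspose_mul, ← Matrix.mul_assoc, h.mul_mul_eq']
  isHermitian_mul := by rw [← conjTranspose_mul]; exact h.isHermitian_mul'.conjTranspose
  isHermitian_mul' := by rw [← conjTranspose_mul]; exact h.isHermitian_mul.conjTranspose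

theorem unique (hB : IsMoorePenroseInverse A B) (hC : IsMoorePenroseInverse A C) : B = C := by
  have hAB : A * B = A * C := calc
    A * B = (A * C) * (A * B) := by rw [← Matrix.mul_assoc, hC.mul_mul_eq]
    _ = (A * C)ᴴ * (A * B)ᴴ := by rw [hC.isHermitian_mul.eq, hB.isHermitian_mul.eq]
    _ = (A * B * A * C)ᴴ := by simp only [conjTranspose_mul, Matrix.mul_assoc]
    _ = A * C := by rw [hB.mul_mul_eq, hC.isHermitian_mul.eq]
  have hBA : B * A = C * A := calc
    B * A = (B * A) * (C * A) := by rw [Matrix.mul_assoc, ← Matrix.mul_assoc A, hC.mul_mul_eq]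
    _ = (B * A)ᴴ * (C * A)ᴴ := by rw [hB.isHermitian_mul'.eq, hC.isHermitian_mul'.eq]
    _ = (C * (A * B * A))ᴴ := by simp only [conjTranspose_mul, Matrix.mul_assoc]
    _ = C * A := by rw [hB.mul_mul_eq, hC.isHermitian_mul'.eq]
  calc B = B * A * B := hB.mul_mul_eq'.symm
    _ = C * A * C := by rw [hBA, Matrix.mul_assoc, hAB, ← Matrix.mul_assoc]
    _ = C := hC.mul_mul_eq'

theorem isHermitian {A B : Matrix n n R} (hA : A.IsHermitian)
    (h : IsMoorePenroseInverse A B) : B.IsHermitian :=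
  (hA.eq ▸ h.conjTranspose).unique h

theorem mulVec_eq_zero {A B : Matrix n n R} (hA : A.IsHermitian)
    (h : IsMoorePenroseInverse A B) {w : n → R} (hw : B *ᵥ w = 0) : A *ᵥ w = 0 := by
  have hA' : A = A * (A * B) := calc
    A = (A * B * A)ᴴ := by rw [h.mul_mul_eq, hA.eq]
    _ = A * (A * B) := by rw [conjTranspose_mul, hA.eq, h.isHermitian_mul.eq]
  rw [hA', ← mulVec_mulVec, ← mulVec_mulVec, hw, mulVec_zero, mulVec_zero]

end Semiring

variable {𝕜 : Type*} [RCLike 𝕜]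

theorem posSemidef {A B : Matrix n n 𝕜} (hA : A.PosSemidef) (h : IsMoorePenroseInverse A B) :
    B.PosSemidef := by
  have hB := h.isHermitian hA.isHermitian
  have := hA.conjTranspose_mul_mul_same B
  rwa [hB.eq, h.mul_mul_eq'] at this

end IsMoorePenroseInverse

variable {𝕜 : Type*} [RCLike 𝕜]

theorem mulVec_eq_zero_of_isMoorePenroseInverse_conjTranspose_mul_mul {t : Type*} [Fintype t]
    {K : Matrix m m 𝕜} (hK : K.PosDef) {S : Matrix m t 𝕜} {B : Matrix t t 𝕜}
    (h : IsMoorePenroseInverse (Sᴴ * K * S) B) {v : m → 𝕜} (hv : (S * B * Sᴴ) *ᵥ v = 0) :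
    (S * Sᴴ) *ᵥ v = 0 := by
  have hM : (Sᴴ * K * S).PosSemidef := hK.posSemidef.conjTranspose_mul_mul_same S
  set w := Sᴴ *ᵥ v
  have hBw : B *ᵥ w = 0 := by
    rw [← (h.posSemidef hM).dotProduct_mulVec_zero_iff, star_mulVec,
      conjTranspose_conjTranspose, ← dotProduct_mulVec, mulVec_mulVec, mulVec_mulVec, hv,
      dotProduct_zero]
  have hMw := h.mulVec_eq_zero hM.isHermitian hBw
  have hSw : S *ᵥ w = 0 := by
    by_contra hne
    have hpos := hK.dotProduct_mulVec_pos hne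
    rw [star_mulVec, ← dotProduct_mulVec, mulVec_mulVec, mulVec_mulVec, hMw,
      dotProduct_zero] at hpos
    exact hpos.false
  rw [← mulVec_mulVec, hSw]

end Matrix

section Expectation

variable {Ω n : Type*} [Fintype n] [MeasurableSpace Ω] {μ : Measure Ω}

theorem integral_dotProduct (v : n → ℝ) {f : Ω → n → ℝ}
    (hf : ∀ i, Integrable (fun ω => f ω i) μ) :
    ∫ ω, v ⬝ᵥ f ω ∂μ = v ⬝ᵥ fun i => ∫ ω, f ω i ∂μ := by
  simp only [dotProduct]
  rw [integral_finsetSum _ fun i _ => (hf i).const_mul (v i)]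
  simp only [integral_const_mul]

theorem integrable_dotProduct (v : n → ℝ) {f : Ω → n → ℝ}
    (hf : ∀ i, Integrable (fun ω => f ω i) μ) : Integrable (fun ω => v ⬝ᵥ f ω) μ :=
  integrable_finsetSum _ fun i _ => (hf i).const_mul (v i)

variable {m : Type*} {X : Ω → Matrix m n ℝ}

theorem integral_mulVec (hX : ∀ i j, Integrable (fun ω => X ω i j) μ) (v : n → ℝ) :
    (of fun i j => ∫ ω, X ω i j ∂μ) *ᵥ v = fun i => ∫ ω, (X ω *ᵥ v) i ∂μ := by
  funext i
  simp only [mulVec, of_apply, dotProduct_comm _ v]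
  exact (integral_dotProduct v (hX i)).symm

theorem integrable_mulVec_apply (hX : ∀ i j, Integrable (fun ω => X ω i j) μ) (v : n → ℝ)
    (i : m) :
    Integrable (fun ω => (X ω *ᵥ v) i) μ := by
  simp only [mulVec, dotProduct_comm _ v]
  exact integrable_dotProduct v (hX i)

theorem integral_mulVec_eq_zero_of_ae (hX : ∀ i j, Integrable (fun ω => X ω i j) μ)
    {v : n → ℝ} (h : ∀ᵐ ω ∂μ, X ω *ᵥ v = 0) : (of fun i j => ∫ ω, X ω i j ∂μ) *ᵥ v = 0 := by
  rw [integral_mulVec hX]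
  funext i
  exact integral_eq_zero_of_ae (h.mono fun ω hω => congrFun hω i)

theorem ae_mulVec_eq_zero_of_integral_mulVec_eq_zero {X : Ω → Matrix n n ℝ}
    (hpsd : ∀ ω, (X ω).PosSemidef) (hX : ∀ i j, Integrable (fun ω => X ω i j) μ) {v : n → ℝ}
    (hv : (of fun i j => ∫ ω, X ω i j ∂μ) *ᵥ v = 0) : ∀ᵐ ω ∂μ, X ω *ᵥ v = 0 := by
  have hnonneg (ω : Ω) : 0 ≤ v ⬝ᵥ X ω *ᵥ v := by
    simpa only [star_trivial] using (hpsd ω).dotProduct_mulVec_nonneg v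
  have hint : ∫ ω, v ⬝ᵥ X ω *ᵥ v ∂μ = 0 := by
    rw [integral_dotProduct v (integrable_mulVec_apply hX v), ← integral_mulVec hX, hv,
      dotProduct_zero]
  filter_upwards [(integral_eq_zero_iff_of_nonneg hnonneg
    (integrable_dotProduct v (integrable_mulVec_apply hX v))).mp hint] with ω hω
  rw [← (hpsd ω).dotProduct_mulVec_zero_iff, star_trivial]
  exact hω

end Expectation

theorem expectation_H_invertible_general {p m τ : ℕ} {Ω : Type*} [MeasurableSpace Ω]
    (μ : Measure Ω)
    (J : Matrix (Fin p) (Fin m) ℝ)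
    (S : Ω → Matrix (Fin m) (Fin τ) ℝ)
    (Mdag : Ω → Matrix (Fin τ) (Fin τ) ℝ)
    (hpen1 : ∀ ω, ((S ω)ᵀ * Jᵀ * J * S ω) * Mdag ω * ((S ω)ᵀ * Jᵀ * J * S ω)
        = (S ω)ᵀ * Jᵀ * J * S ω)
    (hpen2 : ∀ ω, Mdag ω * ((S ω)ᵀ * Jᵀ * J * S ω) * Mdag ω = Mdag ω)
    (hpen3 : ∀ ω, (((S ω)ᵀ * Jᵀ * J * S ω) * Mdag ω)ᵀ = ((S ω)ᵀ * Jᵀ * J * S ω) * Mdag ω)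
    (hpen4 : ∀ ω, (Mdag ω * ((S ω)ᵀ * Jᵀ * J * S ω))ᵀ = Mdag ω * ((S ω)ᵀ * Jᵀ * J * S ω))
    (hSint : ∀ i j, Integrable (fun ω => (S ω * (S ω)ᵀ) i j) μ)
    (hHint : ∀ i j, Integrable (fun ω => (S ω * Mdag ω * (S ω)ᵀ) i j) μ)
    (hSS : IsUnit (Matrix.of fun i j => ∫ ω, (S ω * (S ω)ᵀ) i j ∂μ))
    (hJJ : IsUnit (Jᵀ * J)) :
    IsUnit (Matrix.of fun i j => ∫ ω, (S ω * Mdag ω * (S ω)ᵀ) i j ∂μ) := by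
  simp only [← conjTranspose_eq_transpose_of_trivial] at *
  have hK : (Jᴴ * J).PosDef := (posSemidef_conjTranspose_mul_self J).posDef_iff_isUnit.mpr hJJ
  have hpinv (ω : Ω) : IsMoorePenroseInverse ((S ω)ᴴ * (Jᴴ * J) * S ω) (Mdag ω) := by
    simp only [← Matrix.mul_assoc]
    exact ⟨hpen1 ω, hpen2 ω, hpen3 ω, hpen4 ω⟩
  have hH (ω : Ω) : (S ω * Mdag ω * (S ω)ᴴ).PosSemidef :=
    ((hpinv ω).posSemidef (hK.posSemidef.conjTranspose_mul_mul_same _)).mul_mul_conjTranspose_same _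
  rw [← mulVec_injective_iff_isUnit, ← coe_mulVecLin, injective_iff_map_eq_zero]
  intro v hv
  have hHv : ∀ᵐ ω ∂μ, (S ω * Mdag ω * (S ω)ᴴ) *ᵥ v = 0 :=
    ae_mulVec_eq_zero_of_integral_mulVec_eq_zero hH hHint hv
  have hSSv : (of fun i j => ∫ ω, (S ω * (S ω)ᴴ) i j ∂μ) *ᵥ v = 0 :=
    integral_mulVec_eq_zero_of_ae hSint <| hHv.mono fun ω hω =>
      mulVec_eq_zero_of_isMoorePenroseInverse_conjTranspose_mul_mul hK (hpinv ω) hω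
  exact mulVec_injective_iff_isUnit.mpr hSS (hSSv.trans (mulVec_zero _).symm)

/-- sufficient condition for invertibility of `E[H_S(x)]`.
`J = DF(x)` fixed; `H ω = S(ω) Mdag(ω) S(ω)ᵀ` with `Mdag(ω)` the Moore–Penrose
pseudoinverse of `S(ω)ᵀ Jᵀ J S(ω)`.  If `E[S Sᵀ]` and `Jᵀ J` are invertible, then
`E[H]` is invertible. -/
theorem expectation_H_invertible {p m τ : ℕ} {Ω : Type*} [MeasurableSpace Ω]
    (μ : Measure Ω) [IsProbabilityMeasure μ]
    (J : Matrix (Fin p) (Fin m) ℝ)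
    (S : Ω → Matrix (Fin m) (Fin τ) ℝ)
    (Mdag : Ω → Matrix (Fin τ) (Fin τ) ℝ)
    (hpen1 : ∀ ω, ((S ω)ᵀ * Jᵀ * J * S ω) * Mdag ω * ((S ω)ᵀ * Jᵀ * J * S ω)
        = (S ω)ᵀ * Jᵀ * J * S ω)
    (hpen2 : ∀ ω, Mdag ω * ((S ω)ᵀ * Jᵀ * J * S ω) * Mdag ω = Mdag ω)
    (hpen3 : ∀ ω, (((S ω)ᵀ * Jᵀ * J * S ω) * Mdag ω)ᵀ = ((S ω)ᵀ * Jᵀ * J * S ω) * Mdag ω)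
    (hpen4 : ∀ ω, (Mdag ω * ((S ω)ᵀ * Jᵀ * J * S ω))ᵀ = Mdag ω * ((S ω)ᵀ * Jᵀ * J * S ω))
    (hSint : ∀ i j, Integrable (fun ω => (S ω * (S ω)ᵀ) i j) μ)
    (hHint : ∀ i j, Integrable (fun ω => (S ω * Mdag ω * (S ω)ᵀ) i j) μ)
    (hSS : IsUnit (Matrix.of fun i j => ∫ ω, (S ω * (S ω)ᵀ) i j ∂μ))
    (hJJ : IsUnit (Jᵀ * J)) :
    IsUnit (Matrix.of fun i j => ∫ ω, (S ω * Mdag ω * (S ω)ᵀ) i j ∂μ) :=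
  expectation_H_invertible_general μ J S Mdag hpen1 hpen2 hpen3 hpen4 hSint hHint hSS hJJ
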